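/- arXiv:1606.03447 — 8 statements merged into one kernel-verified Lean document; each statement's English description precedes it below -/
import Mathlib

section
/- Let f and g be sequences defined by f(-1)=0, f(0)=1, g(-1)=0, g(0)=1, and for n≥1: f(n) = b·g(n-1) + a²·f(n-2) and g(n) = -b·f(n-1) + a²·g(n-2). Then f satisfies the single recurrence f(n) = (-1)^(n-1)·b·f(n-1) + a²·f(n-2) for all n ≥ 1. -/
/-- If `f, g : ℤ → R` satisfy the coupled recurrences
`f n = b * g (n-1) + a^2 * f (n-2)` and `g n = -b * f (n-1) + a^2 * g (n-2)`
with `f (-1) = g (-1) = 0` and `f 0 = g 0 = 1`, then `f` satisfies the single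
recurrence `f n = (-1)^(n-1) * b * f (n-1) + a^2 * f (n-2)` for all `n ≥ 1`. -/
theorem stmt0 {R : Type*} [CommRing R] (a b : R) (f g : ℤ → R)
    (hf1 : f (-1) = 0) (hf0 : f 0 = 1) (hg1 : g (-1) = 0) (hg0 : g 0 = 1)
    (hf : ∀ n : ℤ, 1 ≤ n → f n = b * g (n - 1) + a ^ 2 * f (n - 2))
    (hg : ∀ n : ℤ, 1 ≤ n → g n = -b * f (n - 1) + a ^ 2 * g (n - 2)) :
    ∀ n : ℤ, 1 ≤ n →
      f n = (-1 : R) ^ (n - 1).toNat * b * f (n - 1) + a ^ 2 * f (n - 2) := by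
  have key : ∀ k : ℕ, g (k : ℤ) = (-1 : R) ^ k * f (k : ℤ) := by
    intro k
    induction k using Nat.strong_induction_on with
    | _ k ih =>
      match k with
      | 0 => simpa using hg0.trans hf0.symm
      | 1 =>
        have h1 : g 1 = -b * f 0 + a ^ 2 * g (-1) := by
          have := hg 1 le_rfl; norm_num at this ⊢; linear_combination this
        have h2 : f 1 = b * g 0 + a ^ 2 * f (-1) := by
          have := hf 1 le_rfl; norm_num at this ⊢; linear_combination this
        push_cast
        rw [h1, h2, hf0, hg0, hf1, hg1]
        ring
      | (m + 2) =>
        have h1 := hg ((m : ℤ) + 2) (by omega)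
        have h2 := hf ((m : ℤ) + 2) (by omega)
        have e1 := ih (m + 1) (by omega)
        have e0 := ih m (by omega)
        have hm : ((m : ℤ) + 2) - 1 = ((m : ℤ) + 1) := by ring
        have hm2 : ((m : ℤ) + 2) - 2 = (m : ℤ) := by ring
        rw [hm, hm2] at h1 h2
        push_cast at e1 ⊢
        rw [h1, h2, e1, e0]
        have hx : ((-1 : R) ^ m) * ((-1 : R) ^ m) = 1 := by
          rw [← pow_add]; exact Even.neg_one_pow ⟨m, rfl⟩
        rw [pow_succ, pow_succ]
        linear_combination b * f ((m : ℤ) + 1) * hx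
  intro n hn
  have h2 := hf n hn
  have hn1 : (0 : ℤ) ≤ n - 1 := by omega
  have : ((n - 1).toNat : ℤ) = n - 1 := Int.toNat_of_nonneg hn1
  have hgk := key (n - 1).toNat
  rw [this] at hgk
  rw [h2, hgk]
  ring
end

section
/- Let f be defined by f(-1)=0, f(0)=1, f(n) = (-1)^(n-1)·b·f(n-1) + a²·f(n-2). With a = i (the imaginary unit) and b = 1, for every k ≥ 0: if k ≡ 0 or 1 (mod 4) then f(k) = F(k+1), and if k ≡ 2 or 3 (mod 4) then f(k) = -F(k+1), where F denotes the Fibonacci sequence. -/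
/-- With `a = i`, `b = 1`: if `f : ℤ → ℂ` satisfies `f (-1) = 0`, `f 0 = 1` and
`f n = (-1)^(n-1) * b * f (n-1) + a^2 * f (n-2)` for `n ≥ 1`, then for every `k ≥ 0`,
`f k = F (k+1)` when `k ≡ 0, 1 (mod 4)` and `f k = -F (k+1)` when `k ≡ 2, 3 (mod 4)`,
where `F` is the Fibonacci sequence. -/
theorem stmt1 (f : ℤ → ℂ)
    (hf1 : f (-1) = 0) (hf0 : f 0 = 1)
    (hf : ∀ n : ℤ, 1 ≤ n →
      f n = (-1 : ℂ) ^ (n - 1).toNat * 1 * f (n - 1) + Complex.I ^ 2 * f (n - 2)) :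
    ∀ k : ℕ,
      ((k % 4 = 0 ∨ k % 4 = 1) → f k = (Nat.fib (k + 1) : ℂ)) ∧
      ((k % 4 = 2 ∨ k % 4 = 3) → f k = -(Nat.fib (k + 1) : ℂ)) := by
  set s : ℕ → ℂ := fun k => if k % 4 = 0 ∨ k % 4 = 1 then 1 else -1 with hs
  have key : ∀ k : ℕ, f k = s k * (Nat.fib (k + 1) : ℂ) ∧
      f (k + 1 : ℕ) = s (k + 1) * (Nat.fib (k + 2) : ℂ) := by
    intro k
    induction k with
    | zero =>
      constructor
      · simpa [hs] using hf0
      · have h1 := hf 1 (by norm_num)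
        norm_num at h1
        simp [h1, hf0, hf1, hs, Complex.I_sq]
    | succ n ih =>
      obtain ⟨ih0, ih1⟩ := ih
      refine ⟨ih1, ?_⟩
      have h := hf ((n : ℤ) + 2) (by omega)
      have ht : ((n : ℤ) + 2 - 1).toNat = n + 1 := by omega
      have e1 : ((n : ℤ) + 2 - 1) = ((n + 1 : ℕ) : ℤ) := by push_cast; ring
      have e2 : ((n : ℤ) + 2 - 2) = ((n : ℕ) : ℤ) := by push_cast; ring
      have e3 : ((n : ℤ) + 2) = ((n + 1 + 1 : ℕ) : ℤ) := by push_cast; ring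
      rw [ht, e1, e2] at h
      rw [e3] at h
      rw [h, ih0, ih1, Complex.I_sq]
      have hfib : (Nat.fib (n + 1 + 2) : ℂ) = Nat.fib (n + 2) + Nat.fib (n + 1) := by
        rw [show n + 1 + 2 = (n + 1) + 2 from rfl, Nat.fib_add_two]
        push_cast; ring
      rw [hfib]
      have h4 : n % 4 = 0 ∨ n % 4 = 1 ∨ n % 4 = 2 ∨ n % 4 = 3 := by omega
      rcases h4 with h4 | h4 | h4 | h4
      · have hpow : (-1 : ℂ) ^ (n + 1) = -1 :=
          Odd.neg_one_pow (by exact Nat.odd_iff.mpr (by omega))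
        simp only [hs, hpow]
        norm_num [show (n+1) % 4 = 1 by omega, show (n+2) % 4 = 2 by omega, h4]
        try ring
      · have hpow : (-1 : ℂ) ^ (n + 1) = 1 :=
          Even.neg_one_pow (by exact Nat.even_iff.mpr (by omega))
        simp only [hs, hpow]
        norm_num [show (n+1) % 4 = 2 by omega, show (n+2) % 4 = 3 by omega, h4]
        try ring
      · have hpow : (-1 : ℂ) ^ (n + 1) = -1 :=
          Odd.neg_one_pow (by exact Nat.odd_iff.mpr (by omega))
        simp only [hs, hpow]
        norm_num [show (n+1) % 4 = 3 by omega, show (n+2) % 4 = 0 by omega, h4]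
        try ring
      · have hpow : (-1 : ℂ) ^ (n + 1) = 1 :=
          Even.neg_one_pow (by exact Nat.even_iff.mpr (by omega))
        simp only [hs, hpow]
        norm_num [show (n+1) % 4 = 0 by omega, show (n+2) % 4 = 1 by omega, h4]
        try ring
  intro k
  have hk := (key k).1
  constructor
  · intro h; rw [hk]; simp [hs, h]
  · intro h
    have : ¬ (k % 4 = 0 ∨ k % 4 = 1) := by omega
    rw [hk]; simp [hs, this]
end

section
/- Let f be defined by f(-1)=0, f(0)=1, f(n) = (-1)^(n-1)·b·f(n-1) + a²·f(n-2). With a = i and b = 2, for every k ≥ 0: if k ≡ 0 or 1 (mod 4) then f(k) = P(k+1), and if k ≡ 2 or 3 (mod 4) then f(k) = -P(k+1), where P denotes the Pell sequence. -/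
/-- The Pell sequence: `P 0 = 0`, `P 1 = 1`, `P (n+2) = 2 * P (n+1) + P n`
(so `P 1 = 1`, `P 2 = 2`). -/
def pell : ℕ → ℕ
  | 0 => 0
  | 1 => 1
  | (n + 2) => 2 * pell (n + 1) + pell n

/-- With `a = i`, `b = 2`: if `f : ℤ → ℂ` satisfies `f (-1) = 0`, `f 0 = 1` and
`f n = (-1)^(n-1) * b * f (n-1) + a^2 * f (n-2)` for `n ≥ 1`, then for every `k ≥ 0`,
`f k = P (k+1)` when `k ≡ 0, 1 (mod 4)` and `f k = -P (k+1)` when `k ≡ 2, 3 (mod 4)`,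
where `P` is the Pell sequence. -/
theorem stmt2 (f : ℤ → ℂ)
    (hf1 : f (-1) = 0) (hf0 : f 0 = 1)
    (hf : ∀ n : ℤ, 1 ≤ n →
      f n = (-1 : ℂ) ^ (n - 1).toNat * 2 * f (n - 1) + Complex.I ^ 2 * f (n - 2)) :
    ∀ k : ℕ,
      ((k % 4 = 0 ∨ k % 4 = 1) → f k = (pell (k + 1) : ℂ)) ∧
      ((k % 4 = 2 ∨ k % 4 = 3) → f k = -(pell (k + 1) : ℂ)) := by
  have key : ∀ k : ℕ,
      ((k % 4 = 0 ∨ k % 4 = 1) ∧ f k = (pell (k + 1) : ℂ)) ∨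
      ((k % 4 = 2 ∨ k % 4 = 3) ∧ f k = -(pell (k + 1) : ℂ)) := by
    intro k
    induction k using Nat.strong_induction_on with
    | _ k ih =>
      match k with
      | 0 => left; exact ⟨Or.inl rfl, by simp [hf0, pell]⟩
      | 1 =>
        have h := hf 1 (by norm_num)
        norm_num [hf0, hf1] at h
        left; exact ⟨Or.inr rfl, by show f 1 = _; rw [h]; norm_num [pell]⟩
      | (k + 2) =>
        have h := hf (k + 2) (by omega)
        have e1 : ((k : ℤ) + 2) - 1 = ((k + 1 : ℕ) : ℤ) := by push_cast; ring
        have e2 : ((k : ℤ) + 2) - 2 = (k : ℤ) := by ring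
        have et : (((k : ℤ) + 2) - 1).toNat = k + 1 := by omega
        push_cast at h
        rw [e1, e2, Int.toNat_natCast, Complex.I_sq] at h
        have hg : ((k + 2 : ℕ) : ℤ) = (k : ℤ) + 2 := by push_cast; ring
        rw [show (((k+2:ℕ)):ℤ) = (k:ℤ)+2 from hg] at *
        have hp : (pell (k + 3) : ℂ) = 2 * (pell (k + 2) : ℂ) + (pell (k + 1) : ℂ) := by
          show ((pell (k + 1 + 2) : ℕ) : ℂ) = _
          rw [pell]; push_cast; ring
        rcases ih (k + 1) (by omega) with ⟨hm, hv⟩ | ⟨hm, hv⟩ <;>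
          rcases ih k (by omega) with ⟨hm', hv'⟩ | ⟨hm', hv'⟩ <;>
          rw [hv, hv'] at h
        · -- (k+1)%4 ∈ {0,1}, k%4 ∈ {0,1} → k%4=0, (k+1)%4=1, so k+2≡2, k even, k+1 odd
          have hk : k % 4 = 0 := by omega
          right
          refine ⟨Or.inl (by omega), ?_⟩
          have hodd : Odd (k + 1) := by
            rcases Nat.even_or_odd (k+1) with he | ho
            · exfalso; rcases he with ⟨m, hm2⟩; omega
            · exact ho
          rw [hodd.neg_one_pow] at h
          rw [h, hp]; ring
        · -- (k+1)%4 ∈ {0,1}, k%4 ∈ {2,3} → k%4=3, k+1%4=0, k+2≡1, k+1 even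
          have hk : k % 4 = 3 := by omega
          left
          refine ⟨Or.inr (by omega), ?_⟩
          have heven : Even (k + 1) := by
            rcases Nat.even_or_odd (k+1) with he | ho
            · exact he
            · exfalso; rcases ho with ⟨m, hm2⟩; omega
          rw [heven.neg_one_pow] at h
          rw [h, hp]; ring
        · -- (k+1)%4 ∈ {2,3}, k%4 ∈ {0,1} → k%4=1, k+1≡2, k+2≡3, k+1 even
          have hk : k % 4 = 1 := by omega
          right
          refine ⟨Or.inr (by omega), ?_⟩
          have heven : Even (k + 1) := by
            rcases Nat.even_or_odd (k+1) with he | ho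
            · exact he
            · exfalso; rcases ho with ⟨m, hm2⟩; omega
          rw [heven.neg_one_pow] at h
          rw [h, hp]; ring
        · -- (k+1)%4 ∈ {2,3}, k%4 ∈ {2,3} → k%4=2, k+1≡3, k+2≡0, k+1 odd
          have hk : k % 4 = 2 := by omega
          left
          refine ⟨Or.inl (by omega), ?_⟩
          have hodd : Odd (k + 1) := by
            rcases Nat.even_or_odd (k+1) with he | ho
            · exfalso; rcases he with ⟨m, hm2⟩; omega
            · exact ho
          rw [hodd.neg_one_pow] at h
          rw [h, hp]; ring
  intro k
  rcases key k with ⟨hm, hv⟩ | ⟨hm, hv⟩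
  · exact ⟨fun _ => hv, fun hc => by omega⟩
  · exact ⟨fun hc => by omega, fun _ => hv⟩
end

section
/- Let A_k and B_k be as defined from parameters a, b, and let F_{2k} = [[A_k, B_k],[(−1)^k·B_k, A_k]]. Then F_{2k} is skew-centrosymmetric: J·F_{2k}·J = −F_{2k}, where J is the 2k×2k exchange (anti-identity) matrix. -/
/-!
Under `finSumFinEquiv`, the exchange matrix `J` is the permutation matrix of the reversal of
`Fin k ⊕ Fin k`, which maps the first block onto the reversed second block and vice versa. Hence
conjugating by `J` swaps the two diagonal blocks and the two off-diagonal blocks and reverses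
every block in both indices. Reversal negates `A_k`, since it exchanges its super- and
subdiagonal, and multiplies `B_k` by `(-1)^(k-1)`, since an anti-diagonal entry `(p, q)` has
sign `(-1)^p` and `(-1)^q = (-1)^(k-1) (-1)^p`. As `((-1)^k)^2 = 1`, all four blocks of
`J F_{2k} J` are those of `-F_{2k}`.
-/

open Matrix

theorem Matrix.toMatrix_toPEquiv_mul_mul_toMatrix_toPEquiv {l m n o α : Type*} [Fintype m]
    [DecidableEq m] [Fintype n] [DecidableEq o] [NonAssocSemiring α]
    (f : l ≃ m) (M : Matrix m n α) (g : n ≃ o) :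
    (f.toPEquiv.toMatrix : Matrix l m α) * M * (g.toPEquiv.toMatrix : Matrix n o α) =
      M.submatrix f g.symm := by
  rw [PEquiv.toMatrix_toPEquiv_mul, PEquiv.mul_toMatrix_toPEquiv, submatrix_submatrix]
  rfl

/-- The reversal `Fin.rev` of `Fin (k + k)`, transported along `finSumFinEquiv`. -/
def Fin.revSum (k : ℕ) : Equiv.Perm (Fin k ⊕ Fin k) :=
  (Equiv.sumCongr Fin.revPerm Fin.revPerm).trans (Equiv.sumComm _ _)

@[simp] lemma Fin.revSum_inl {k : ℕ} (p : Fin k) : Fin.revSum k (.inl p) = .inr p.rev := rfl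

@[simp] lemma Fin.revSum_inr {k : ℕ} (p : Fin k) : Fin.revSum k (.inr p) = .inl p.rev := rfl

lemma Fin.revSum_symm (k : ℕ) : (Fin.revSum k).symm = Fin.revSum k := by
  ext (p | p) <;> simp [Equiv.symm_apply_eq]

lemma Matrix.eq_toMatrix_revSum_of_exchange {R : Type*} [Zero R] [One R] {k : ℕ}
    {J : Matrix (Fin k ⊕ Fin k) (Fin k ⊕ Fin k) R}
    (hJ : ∀ p q : Fin k ⊕ Fin k,
      J p q = if (finSumFinEquiv p).1 + (finSumFinEquiv q).1 + 1 = 2 * k then 1 else 0) :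
    J = (Fin.revSum k).toPEquiv.toMatrix := by
  ext p q
  rw [hJ, PEquiv.toMatrix_apply]
  refine if_congr ?_ rfl rfl
  rw [Equiv.toPEquiv_apply, Option.mem_def, Option.some_inj]
  rcases p with p | p <;> rcases q with q | q <;>
    simp [Fin.ext_iff, Fin.val_rev] <;> omega

lemma Matrix.fromBlocks_submatrix_revSum {k : ℕ} {α : Type*}
    (P Q S T : Matrix (Fin k) (Fin k) α) :
    (fromBlocks P Q S T).submatrix (Fin.revSum k) (Fin.revSum k) =
      fromBlocks (T.submatrix Fin.rev Fin.rev) (S.submatrix Fin.rev Fin.rev)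
        (Q.submatrix Fin.rev Fin.rev) (P.submatrix Fin.rev Fin.rev) := by
  ext (p | p) (q | q) <;> rfl

lemma Matrix.submatrix_rev_rev_of_skewTridiagonal {R : Type*} [AddGroup R] (a : R) {k : ℕ}
    {A : Matrix (Fin k) (Fin k) R}
    (hA : ∀ p q : Fin k, A p q =
      if q.1 = p.1 + 1 then a else if p.1 = q.1 + 1 then -a else 0) :
    A.submatrix Fin.rev Fin.rev = -A := by
  ext p q
  simp only [submatrix_apply, Matrix.neg_apply, hA, Fin.val_rev]
  have := p.isLt; have := q.isLt
  split_ifs <;> first | omega | simp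

lemma Matrix.submatrix_rev_rev_of_signedAntidiagonal {R : Type*} [Ring R] (b : R) {k : ℕ}
    {B : Matrix (Fin k) (Fin k) R}
    (hB : ∀ p q : Fin k, B p q = if p.1 + q.1 + 1 = k then (-1 : R) ^ p.1 * b else 0) :
    B.submatrix Fin.rev Fin.rev = -((-1 : R) ^ k • B) := by
  ext p q
  simp only [submatrix_apply, Matrix.neg_apply, Matrix.smul_apply, smul_eq_mul, hB, Fin.val_rev]
  have := p.isLt; have := q.isLt
  split_ifs with h₁ h₂ h₂
  · rw [show k - (p.1 + 1) = q.1 by omega, ← mul_assoc, ← pow_add,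
      show k + p.1 = 2 * p.1 + q.1 + 1 by omega, pow_succ, pow_add, pow_mul]
    simp
  all_goals first | omega | simp

/-- Let `A_k`, `B_k` be as in the paper and `F_{2k} = [[A_k, B_k], [(-1)^k B_k, A_k]]`.
Then `F_{2k}` is skew-centrosymmetric: `J * F * J = -F`, where `J` is the `2k × 2k`
exchange (anti-identity) matrix. -/
theorem stmt9 {R : Type*} [CommRing R] (a b : R) (k : ℕ)
    (A B : Matrix (Fin k) (Fin k) R)
    (hA : ∀ p q : Fin k, A p q =
      if q.1 = p.1 + 1 then a else if p.1 = q.1 + 1 then -a else 0)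
    (hB : ∀ p q : Fin k, B p q =
      if p.1 + q.1 + 1 = k then (-1 : R) ^ p.1 * b else 0)
    (J : Matrix (Fin k ⊕ Fin k) (Fin k ⊕ Fin k) R)
    (hJ : ∀ p q : Fin k ⊕ Fin k,
      J p q = if (finSumFinEquiv p).1 + (finSumFinEquiv q).1 + 1
          = 2 * k then 1 else 0) :
    J * (Matrix.fromBlocks A B (((-1 : R) ^ k) • B) A) * J =
      -(Matrix.fromBlocks A B (((-1 : R) ^ k) • B) A) := by
  have hσB : ((-1 : R) ^ k • B).submatrix Fin.rev Fin.rev = -B := calc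
    _ = (-1 : R) ^ k • B.submatrix Fin.rev Fin.rev := rfl
    _ = -(((-1 : R) ^ k * (-1) ^ k) • B) := by
      rw [submatrix_rev_rev_of_signedAntidiagonal b hB, smul_neg, smul_smul]
    _ = -B := by rw [← mul_pow, neg_one_mul, neg_neg, one_pow, one_smul]
  rw [eq_toMatrix_revSum_of_exchange hJ, toMatrix_toPEquiv_mul_mul_toMatrix_toPEquiv,
    Fin.revSum_symm, fromBlocks_submatrix_revSum, hσB,
    submatrix_rev_rev_of_skewTridiagonal a hA, submatrix_rev_rev_of_signedAntidiagonal b hB,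
    fromBlocks_neg]
end

section
/- For the 2k×2k matrix F_{2k} = [[A_k, B_k],[(−1)^k·B_k, A_k]] built from parameters a, b: det(F_{2k}) equals the determinant of the k×k matrix A_k² − (−1)^k·B_k², which equals det of the k×k symmetric pentadiagonal-type matrix T_k with diagonal entries (−a²+b², −2a²+b², ..., −2a²+b², −a²+b²) and entries a² at positions (i, i+2) and (i+2, i). -/
/-!
`F_{2k}` has the block form `[[A, B], [C, A]]` with `C = (-1)^k B`, and `A` commutes with `B`:
conjugating by the anti-diagonal reversal turns `A` into `-A`, and so does conjugating by the
diagonal of alternating signs. When the lower blocks `C`, `D` commute, multiplying on the right by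
`[[D, 0], [-C, 1]]` gives `det F · det D = det (AD - BC) · det D`; replacing `D` by `X + D` over
`R[X]` makes `det D` monic, so it cancels, and setting `X = 0` gives `det F = det (A² - (-1)^k B²)`.
Finally `B² = (-1)^(k+1) b² · 1`, so `A² - (-1)^k B² = A² + b² · 1`, and squaring the skew-symmetric
tridiagonal `A` gives the pentadiagonal pattern of `T_k`.
-/

open Matrix Polynomial

section BlockDeterminant

variable {n R : Type*} [Fintype n] [DecidableEq n] [CommRing R]

theorem Matrix.det_fromBlocks_mul_det_of_commute (A B C D : Matrix n n R) (hCD : C * D = D * C) :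
    (fromBlocks A B C D).det * D.det = (A * D - B * C).det * D.det := by
  have h : fromBlocks A B C D * fromBlocks D 0 (-C) 1 = fromBlocks (A * D - B * C) B 0 D := by
    simp [fromBlocks_multiply, hCD, sub_eq_add_neg]
  simpa [det_fromBlocks_zero₁₂, det_fromBlocks_zero₂₁] using congrArg det h

theorem Matrix.det_fromBlocks_of_commute (A B C D : Matrix n n R) (hCD : C * D = D * C) :
    (fromBlocks A B C D).det = (A * D - B * C).det := by
  let ι : R →+* R[X] := Polynomial.C
  -- `charmatrix (-D)` is `X + D`.
  have hcomm : ι.mapMatrix C * charmatrix (-D) = charmatrix (-D) * ι.mapMatrix C :=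
    Commute.eq <| (scalar_commute X (Commute.all X) _).symm.sub_right <| by
      rw [Commute, SemiconjBy, ← map_mul, ← map_mul, mul_neg, neg_mul, hCD]
  have hlift := (charpoly_monic (-D)).isRegular.right <|
    det_fromBlocks_mul_det_of_commute (ι.mapMatrix A) (ι.mapMatrix B) _ _ hcomm
  have hev : (charmatrix (-D)).map (eval 0) = D := by
    ext i j
    by_cases hij : i = j <;> simp [hij]
  have hevι (M : Matrix n n R) : (evalRingHom 0).mapMatrix (ι.mapMatrix M) = M := by
    ext
    simp [ι]
  have hlift₀ := congrArg (evalRingHom (0 : R)) hlift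
  simp only [RingHom.map_det, map_sub, map_mul, hevι] at hlift₀
  simpa [RingHom.mapMatrix_apply, fromBlocks_map, ι, Function.comp_def, hev] using hlift₀

end BlockDeterminant

section PentadiagonalBlocks

variable {R : Type*} [CommRing R] {k : ℕ} {m : Type*}

lemma Fin.sum_univ_ite_val_eq {M : Type*} [AddCommMonoid M] (c : ℕ) (f : Fin k → M) :
    (∑ r : Fin k, if r.1 = c then f r else 0) = if h : c < k then f ⟨c, h⟩ else 0 := by
  split_ifs with h
  · simpa [Fin.ext_iff] using Finset.sum_ite_eq' Finset.univ (⟨c, h⟩ : Fin k) f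
  · exact Finset.sum_eq_zero fun r _ => if_neg fun hr : r.1 = c => h (hr ▸ r.2)

def skewTridiagonal (a : R) (k : ℕ) : Matrix (Fin k) (Fin k) R :=
  of fun p q => if q.1 = p.1 + 1 then a else if p.1 = q.1 + 1 then -a else 0

def alternatingAntidiagonal (b : R) (k : ℕ) : Matrix (Fin k) (Fin k) R :=
  of fun p q => if p.1 + q.1 + 1 = k then (-1) ^ p.1 * b else 0

lemma alternatingAntidiagonal_apply (b : R) (p q : Fin k) :
    alternatingAntidiagonal b k p q = if p.rev = q then (-1) ^ p.1 * b else 0 := by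
  simp only [alternatingAntidiagonal, of_apply, Fin.ext_iff, Fin.val_rev]
  congr 1
  exact propext (by omega)

lemma alternatingAntidiagonal_mul_apply (b : R) (M : Matrix (Fin k) m R) (p : Fin k) (j : m) :
    (alternatingAntidiagonal b k * M) p j = (-1) ^ p.1 * b * M p.rev j := by
  simp [mul_apply, alternatingAntidiagonal_apply, ite_mul]

lemma mul_alternatingAntidiagonal_apply [Fintype m] (b : R) (M : Matrix m (Fin k) R) (i : m)
    (q : Fin k) : (M * alternatingAntidiagonal b k) i q = M i q.rev * ((-1) ^ q.rev.1 * b) := by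
  simp [mul_apply, alternatingAntidiagonal_apply, mul_ite, Fin.rev_eq_iff]

lemma alternatingAntidiagonal_mul_self (b : R) :
    alternatingAntidiagonal b k * alternatingAntidiagonal b k = ((-1) ^ (k + 1) * b ^ 2) • 1 := by
  ext p q
  rw [alternatingAntidiagonal_mul_apply, alternatingAntidiagonal_apply, Fin.rev_rev,
    Matrix.smul_apply, one_apply]
  have hsign : (-1 : R) ^ (k + 1) = (-1) ^ p.1 * (-1) ^ p.rev.1 := by
    rw [← pow_add, Fin.val_rev, show k + 1 = p.1 + (k - (p.1 + 1)) + 2 by omega, pow_add]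
    simp
  split_ifs with hpq
  · rw [smul_eq_mul, hsign]
    ring
  · simp

lemma skewTridiagonal_mul_alternatingAntidiagonal (a b : R) :
    skewTridiagonal a k * alternatingAntidiagonal b k =
      alternatingAntidiagonal b k * skewTridiagonal a k := by
  ext p q
  rw [alternatingAntidiagonal_mul_apply, mul_alternatingAntidiagonal_apply]
  simp only [skewTridiagonal, of_apply, Fin.val_rev]
  split_ifs <;> grind

lemma skewTridiagonal_mul_apply (a : R) (M : Matrix (Fin k) m R) (p : Fin k) (j : m) :
    (skewTridiagonal a k * M) p j =
      (if h : p.1 + 1 < k then a * M ⟨p.1 + 1, h⟩ j else 0) -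
        (if h : 0 < p.1 then a * M ⟨p.1 - 1, by omega⟩ j else 0) := by
  have hsplit (r : Fin k) : skewTridiagonal a k p r * M r j =
      (if r.1 = p.1 + 1 then a * M r j else 0) -
        (if 0 < p.1 then (if r.1 = p.1 - 1 then a * M r j else 0) else 0) := by
    simp only [skewTridiagonal, of_apply]
    split_ifs <;> first | omega | ring
  rw [mul_apply, Finset.sum_congr rfl fun r _ => hsplit r, Finset.sum_sub_distrib,
    Fin.sum_univ_ite_val_eq]
  by_cases hp : 0 < p.1
  · simp [hp, Fin.sum_univ_ite_val_eq, show p.1 - 1 < k by omega]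
  · simp [hp]

lemma skewTridiagonal_mul_self_apply (a : R) (hk : 2 ≤ k) (p q : Fin k) :
    (skewTridiagonal a k * skewTridiagonal a k) p q =
      if p.1 = q.1 then (if p.1 = 0 ∨ p.1 = k - 1 then -a ^ 2 else -2 * a ^ 2)
      else if q.1 = p.1 + 2 ∨ p.1 = q.1 + 2 then a ^ 2 else 0 := by
  rw [skewTridiagonal_mul_apply]
  simp only [skewTridiagonal, of_apply]
  split_ifs <;> first | omega | ring

end PentadiagonalBlocks

/-- For `k ≥ 2` and `F_{2k} = [[A_k, B_k], [(-1)^k B_k, A_k]]`: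
`det F_{2k} = det (A_k² - (-1)^k B_k²)`, and this equals the determinant of the `k × k`
matrix `T_k` with diagonal `(-a²+b², -2a²+b², …, -2a²+b², -a²+b²)` and entries `a²`
at positions `(i, i+2)` and `(i+2, i)`. -/
theorem stmt10 {K : Type*} [Field K] (a b : K) (k : ℕ) (hk : 2 ≤ k)
    (A B : Matrix (Fin k) (Fin k) K)
    (hA : ∀ p q : Fin k, A p q =
      if q.1 = p.1 + 1 then a else if p.1 = q.1 + 1 then -a else 0)
    (hB : ∀ p q : Fin k, B p q =
      if p.1 + q.1 + 1 = k then (-1 : K) ^ p.1 * b else 0)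
    (T : Matrix (Fin k) (Fin k) K)
    (hT : ∀ p q : Fin k, T p q =
      if p.1 = q.1 then
        (if p.1 = 0 ∨ p.1 = k - 1 then -a ^ 2 + b ^ 2 else -2 * a ^ 2 + b ^ 2)
      else if q.1 = p.1 + 2 ∨ p.1 = q.1 + 2 then a ^ 2
      else 0) :
    (Matrix.fromBlocks A B (((-1 : K) ^ k) • B) A).det
        = (A * A - ((-1 : K) ^ k) • (B * B)).det ∧
      (Matrix.fromBlocks A B (((-1 : K) ^ k) • B) A).det = T.det := by
  have hA' : A = skewTridiagonal a k := Matrix.ext hA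
  have hB' : B = alternatingAntidiagonal b k := Matrix.ext hB
  have hAB : A * B = B * A := hA' ▸ hB' ▸ skewTridiagonal_mul_alternatingAntidiagonal a b
  have hBB : (-1 : K) ^ k • (B * B) = (-b ^ 2) • 1 := by
    rw [hB', alternatingAntidiagonal_mul_self, smul_smul, ← mul_assoc, ← pow_add,
      Odd.neg_one_pow ⟨k, by ring⟩, neg_one_mul]
  have hdet := det_fromBlocks_of_commute A B ((-1 : K) ^ k • B) A <| by
    rw [Matrix.smul_mul, Matrix.mul_smul, hAB]
  rw [Matrix.mul_smul] at hdet
  refine ⟨hdet, hdet.trans (congrArg det ?_)⟩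
  ext p q
  rw [Matrix.sub_apply, hBB, Matrix.smul_apply, hA', skewTridiagonal_mul_self_apply a hk, hT]
  rcases eq_or_ne p q with rfl | hpq
  · simp only [one_apply_eq, if_true, smul_eq_mul]
    split_ifs <;> ring
  · simp [one_apply_ne hpq, Fin.val_ne_of_ne hpq]
end

section
/- Let T_k be the k×k '2-tridiagonal' matrix with diagonal (−a²+b², −2a²+b², ..., −2a²+b², −a²+b²) and entries a² in positions (i,i+2) and (i+2,i). If k is even, then det(T_k) = ((−a²+b²)·w(k/2 − 1) − a⁴·w(k/2 − 2))², where w(i) = (−2a²+b²)·w(i−1) − a⁴·w(i−2), w(0)=1, w(−1)=0. -/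
/-!
Listing the even indices before the odd ones makes `T_k` block diagonal, with two tridiagonal
`k/2 × k/2` blocks of off-diagonal entry `a²`: one has diagonal `(-a²+b², -2a²+b², …)`, the other
is its reversal. Expanding along the last row shows that the determinants of the leading
principal minors of such a block satisfy the recurrence of `w`, which identifies the determinant
of the block with `(-a²+b²) w(k/2-1) - a⁴ w(k/2-2)`.
-/

namespace Matrix

variable {R : Type*} [CommRing R]

def tridiag (n : ℕ) (A B c : R) : Matrix (Fin n) (Fin n) R :=
  Matrix.of fun i j =>
    if i = j then (if i.1 = 0 then A else B)
    else if j.1 = i.1 + 1 ∨ i.1 = j.1 + 1 then c else 0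

def twoTridiag (k : ℕ) (A B c : R) : Matrix (Fin k) (Fin k) R :=
  Matrix.of fun p q =>
    if p.1 = q.1 then (if p.1 = 0 ∨ p.1 = k - 1 then A else B)
    else if q.1 = p.1 + 2 ∨ p.1 = q.1 + 2 then c else 0

variable (A B c : R)

theorem tridiag_submatrix_castSucc (n : ℕ) :
    (tridiag (n + 1) A B c).submatrix Fin.castSucc Fin.castSucc = tridiag n A B c := by
  ext i j
  simp only [tridiag, submatrix_apply, of_apply, Fin.ext_iff, Fin.val_castSucc]

theorem tridiag_apply_eq_zero {n : ℕ} {i j : Fin n} (h : i.1 + 1 < j.1 ∨ j.1 + 1 < i.1) :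
    tridiag n A B c i j = 0 := by
  simp only [tridiag, of_apply, Fin.ext_iff]
  rw [if_neg (by omega), if_neg (by omega)]

theorem det_tridiag_succ_succ (n : ℕ) :
    (tridiag (n + 2) A B c).det =
      B * (tridiag (n + 1) A B c).det - c ^ 2 * (tridiag n A B c).det := by
  -- the last column of this minor is `c` times the last basis vector
  have hminor : ((tridiag (n + 2) A B c).submatrix Fin.castSucc
      (Fin.last n).castSucc.succAbove).det = c * (tridiag n A B c).det := by
    rw [det_succ_column _ (Fin.last n), Fin.sum_univ_castSucc, Finset.sum_eq_zero]
    · have hsub : (tridiag (n + 2) A B c).submatrix (fun x : Fin n => x.castSucc.castSucc)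
          (fun x => (Fin.last n).castSucc.succAbove x.castSucc) = tridiag n A B c := by
        ext i j
        rw [submatrix_apply, Fin.succAbove_castSucc_of_lt _ _ (Fin.castSucc_lt_last j)]
        simp only [tridiag, of_apply, Fin.ext_iff, Fin.val_castSucc]
      simp only [submatrix_submatrix, Fin.succAbove_last, Function.comp_def, hsub]
      simp [tridiag]
    · intro i _
      simp only [submatrix_apply, Fin.succAbove_castSucc_self]
      rw [tridiag_apply_eq_zero _ _ _ (by simp), mul_zero, zero_mul]
  rw [det_succ_row _ (Fin.last (n + 1)), Fin.sum_univ_castSucc, Fin.sum_univ_castSucc,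
    Finset.sum_eq_zero]
  · simp only [Fin.succAbove_last]
    have h1 : tridiag (n + 2) A B c (Fin.last (n + 1)) (Fin.last n).castSucc = c := by
      simp only [tridiag, of_apply, Fin.ext_iff, Fin.val_last, Fin.val_castSucc]
      simp
    have h2 : tridiag (n + 2) A B c (Fin.last (n + 1)) (Fin.last (n + 1)) = B := by
      simp [tridiag]
    rw [hminor, tridiag_submatrix_castSucc, h1, h2]
    simp only [Fin.val_last, Fin.val_castSucc, odd_add_one_self, Odd.neg_one_pow, Even.add_self,
      Even.neg_one_pow, zero_add]
    ring
  · intro i _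
    rw [tridiag_apply_eq_zero _ _ _ (by simp), mul_zero, zero_mul]

theorem det_tridiag_succ (w : ℤ → R) (hw_neg_one : w (-1) = 0) (hw_zero : w 0 = 1)
    (hw : ∀ i : ℤ, 1 ≤ i → w i = B * w (i - 1) - c ^ 2 * w (i - 2)) (n : ℕ) :
    (tridiag (n + 1) A B c).det = A * w n - c ^ 2 * w (n - 1) := by
  have h_one : (tridiag 1 A B c).det = A := by simp [tridiag]
  induction n using Nat.twoStepInduction with
  | zero => simpa [hw_zero, hw_neg_one] using h_one
  | one =>
    have hw_one : w 1 = B := by simpa [hw_zero, hw_neg_one] using hw 1 le_rfl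
    rw [det_tridiag_succ_succ, h_one, det_fin_zero, Nat.cast_one, sub_self, hw_one, hw_zero]
    ring
  | more n ih₀ ih₁ =>
    have h₂ := hw (n + 2) (by omega)
    have h₁ := hw (n + 1) (by omega)
    rw [det_tridiag_succ_succ, ih₁, ih₀]
    push_cast at h₁ h₂ ⊢
    linear_combination (norm := ring_nf) (-A) * h₂ + c ^ 2 * h₁

-- `finProdFinEquiv` sends `(i, r) : Fin m × Fin 2` to `2 * i + r`.
theorem twoTridiag_submatrix_finProdFinEquiv (m : ℕ) :
    (twoTridiag (m * 2) A B c).submatrix finProdFinEquiv finProdFinEquiv =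
      blockDiagonal ![tridiag m A B c, (tridiag m A B c).submatrix Fin.revPerm Fin.revPerm] := by
  ext ⟨i, r⟩ ⟨j, s⟩
  have := i.isLt
  have := j.isLt
  fin_cases r <;> fin_cases s <;>
    simp only [submatrix_apply, blockDiagonal_apply, twoTridiag, tridiag, of_apply, Fin.ext_iff,
      finProdFinEquiv_apply_val, Fin.revPerm_apply, Fin.val_rev, Fin.zero_eta, Fin.mk_one,
      Fin.val_zero, Fin.val_one, cons_val_zero, cons_val_one, zero_ne_one, one_ne_zero, ↓reduceIte] <;>
    split_ifs <;> first | rfl | omega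

theorem det_twoTridiag (m : ℕ) :
    (twoTridiag (m * 2) A B c).det = (tridiag m A B c).det ^ 2 := by
  rw [← det_submatrix_equiv_self finProdFinEquiv, twoTridiag_submatrix_finProdFinEquiv,
    det_blockDiagonal, Fin.prod_univ_two]
  simp [det_submatrix_equiv_self, sq]

end Matrix

open Matrix

/-- For `k` even (`k ≥ 2`), the determinant of the `k × k` "2-tridiagonal" matrix `T_k`
with diagonal `(-a²+b², -2a²+b², …, -2a²+b², -a²+b²)` and entries `a²` at positions
`(i, i+2)` and `(i+2, i)` equals `((-a²+b²) w(k/2-1) - a⁴ w(k/2-2))²`, where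
`w(-1) = 0`, `w 0 = 1`, `w i = (-2a²+b²) w(i-1) - a⁴ w(i-2)`. -/
theorem stmt11 {K : Type*} [Field K] (a b : K) (k : ℕ) (hk2 : 2 ≤ k) (hke : k % 2 = 0)
    (T : Matrix (Fin k) (Fin k) K)
    (hT : ∀ p q : Fin k, T p q =
      if p.1 = q.1 then
        (if p.1 = 0 ∨ p.1 = k - 1 then -a ^ 2 + b ^ 2 else -2 * a ^ 2 + b ^ 2)
      else if q.1 = p.1 + 2 ∨ p.1 = q.1 + 2 then a ^ 2
      else 0)
    (w : ℤ → K) (hwneg : ∀ i : ℤ, i < 0 → w i = 0) (hw0 : w 0 = 1)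
    (hw : ∀ i : ℤ, 1 ≤ i → w i = (-2 * a ^ 2 + b ^ 2) * w (i - 1) - a ^ 4 * w (i - 2)) :
    T.det = ((-a ^ 2 + b ^ 2) * w ((k / 2 : ℕ) - 1) - a ^ 4 * w ((k / 2 : ℕ) - 2)) ^ 2 := by
  obtain ⟨n, rfl⟩ : ∃ n, k = (n + 1) * 2 := ⟨k / 2 - 1, by omega⟩
  have hT' : T = twoTridiag ((n + 1) * 2) (-a ^ 2 + b ^ 2) (-2 * a ^ 2 + b ^ 2) (a ^ 2) := by
    ext p q
    exact hT p q
  have hw' (i : ℤ) (hi : 1 ≤ i) :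
      w i = (-2 * a ^ 2 + b ^ 2) * w (i - 1) - (a ^ 2) ^ 2 * w (i - 2) := by
    rw [hw i hi]
    ring
  rw [hT', det_twoTridiag, det_tridiag_succ _ _ _ w (hwneg _ (by norm_num)) hw0 hw' n,
    Nat.mul_div_cancel _ two_pos]
  push_cast
  ring_nf
end

section
/- A k-tridiagonal matrix admits a block diagonalization by a permutation: there is a permutation matrix P such that, for the k×k matrix T with nonzero entries only on the main diagonal and the second super- and sub-diagonals (entries at distance 2), PᵀTP is block diagonal with two tridiagonal blocks, one of size ⌈k/2⌉ (the odd-indexed rows/columns) and one of size ⌊k/2⌋ (the even-indexed rows/columns). Consequently det(T) = det(T_odd)·det(T_even), where T_odd[i,j] = T[2i−1, 2j−1] and T_even[i,j] = T[2i, 2j]. -/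
/-!
Listing the even positions `0, 2, 4, …` before the odd positions `1, 3, 5, …` is a permutation
of `Fin k`. An entry `T p q` with `p`, `q` of different parity has `|p - q|` odd, hence lies off
the three nonzero diagonals, so the permuted matrix is block diagonal and its determinant
is the product of the determinants of the two blocks.
-/

open Matrix

/-- Indices are 0-based here: `inl i ↦ 2 * i` enumerates the paper's odd indices `2i - 1`,
and `inr i ↦ 2 * i + 1` its even indices `2i`. -/
def finEvenOddEquiv (k : ℕ) : Fin ((k + 1) / 2) ⊕ Fin (k / 2) ≃ Fin k where
  toFun := Sum.elim (fun i => ⟨2 * i, by omega⟩) (fun i => ⟨2 * i + 1, by omega⟩)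
  invFun n := if h : n.1 % 2 = 0 then .inl ⟨n / 2, by omega⟩ else .inr ⟨n / 2, by omega⟩
  left_inv := by
    rintro (i | i)
    · simp
    · simp only [Sum.elim_inr, Nat.mul_add_mod_self_left, Nat.mod_succ, one_ne_zero,
        ↓reduceDIte, Sum.inr.injEq, Fin.ext_iff]
      omega
  right_inv n := by
    by_cases h : n.1 % 2 = 0
    · simp only [h, ↓reduceDIte, Sum.elim_inl, Fin.ext_iff]
      omega
    · simp only [h, ↓reduceDIte, Sum.elim_inr, Fin.ext_iff]
      omega

@[simp]
theorem finEvenOddEquiv_inl {k : ℕ} (i : Fin ((k + 1) / 2)) :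
    finEvenOddEquiv k (.inl i) = ⟨2 * i, by omega⟩ :=
  rfl

@[simp]
theorem finEvenOddEquiv_inr {k : ℕ} (i : Fin (k / 2)) :
    finEvenOddEquiv k (.inr i) = ⟨2 * i + 1, by omega⟩ :=
  rfl

theorem submatrix_finEvenOddEquiv_eq_fromBlocks {R : Type*} [Zero R] {k : ℕ}
    (T : Matrix (Fin k) (Fin k) R) (hT : ∀ p q : Fin k, p.1 % 2 ≠ q.1 % 2 → T p q = 0) :
    T.submatrix (finEvenOddEquiv k) (finEvenOddEquiv k) = fromBlocks
      (of fun i j : Fin ((k + 1) / 2) => T ⟨2 * i, by omega⟩ ⟨2 * j, by omega⟩) 0 0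
      (of fun i j : Fin (k / 2) => T ⟨2 * i + 1, by omega⟩ ⟨2 * j + 1, by omega⟩) := by
  ext (i | i) (j | j)
  · rfl
  · exact hT _ _ (by simp)
  · exact hT _ _ (by simp)
  · rfl

/-- A matrix `T` whose nonzero entries lie only on the main diagonal and the second
super- and sub-diagonals can be block-diagonalized by a permutation: there is a
bijection putting `T` into block-diagonal form with the tridiagonal blocks `T_odd`
(odd-indexed rows/columns) and `T_even` (even-indexed rows/columns); consequently
`det T = det T_odd * det T_even`. -/
theorem stmt13 {R : Type*} [CommRing R] (k : ℕ) (T : Matrix (Fin k) (Fin k) R)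
    (hT : ∀ p q : Fin k,
      p.1 ≠ q.1 → q.1 ≠ p.1 + 2 → p.1 ≠ q.1 + 2 → T p q = 0) :
    ∃ e : Fin ((k + 1) / 2) ⊕ Fin (k / 2) ≃ Fin k,
      T.submatrix e e = Matrix.fromBlocks
          (Matrix.of fun i j : Fin ((k + 1) / 2) =>
            T ⟨2 * i.1, by have := i.isLt; omega⟩ ⟨2 * j.1, by have := j.isLt; omega⟩)
          0 0
          (Matrix.of fun i j : Fin (k / 2) =>
            T ⟨2 * i.1 + 1, by have := i.isLt; omega⟩
              ⟨2 * j.1 + 1, by have := j.isLt; omega⟩) ∧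
      T.det =
        (Matrix.of fun i j : Fin ((k + 1) / 2) =>
          T ⟨2 * i.1, by have := i.isLt; omega⟩ ⟨2 * j.1, by have := j.isLt; omega⟩).det *
        (Matrix.of fun i j : Fin (k / 2) =>
          T ⟨2 * i.1 + 1, by have := i.isLt; omega⟩
            ⟨2 * j.1 + 1, by have := j.isLt; omega⟩).det := by
  have hblock := submatrix_finEvenOddEquiv_eq_fromBlocks T fun p q hpq ↦
    hT p q (by omega) (by omega) (by omega)
  refine ⟨finEvenOddEquiv k, hblock, ?_⟩
  rw [← det_submatrix_equiv_self (finEvenOddEquiv k) T, hblock, det_fromBlocks_zero₂₁]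
end

section
/- With a = i, b = 1, the determinant of the 2k×2k matrix F_{2k} (defined from A_k and B_k) equals F(k+1)², the square of the (k+1)-st Fibonacci number, for all k ≥ 1. -/
/-!
Both off-diagonal blocks of `F_{2k}` are the signed exchange matrix `E` (up to the sign
`(-1)^k`), which is invertible with `E² = (-1)^(k+1)` and commutes with `A`. Hence the
determinant of the block matrix is `det (A² - (-1)^k E²) = det (A² + 1)
= det (A + i) · det (A - i)`. Both factors are tridiagonal Toeplitz matrices `T` with diagonal
`d = ±i` and off-diagonal product `-d²`, so the cofactor recurrence
`det T_{n+2} = d det T_{n+1} + d² det T_n` gives `det T_n = dⁿ F(n+1)`, and the two powers of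
`±i` cancel.
-/

namespace Matrix

variable {R : Type*} [CommRing R]

section Blocks

variable {n : Type*} [Fintype n] [DecidableEq n]

theorem det_fromBlocks_zero_one_one_zero :
    (fromBlocks 0 1 1 0 : Matrix (n ⊕ n) (n ⊕ n) R).det = (-1) ^ Fintype.card n := by
  have h : (fromBlocks 0 1 1 0 : Matrix (n ⊕ n) (n ⊕ n) R) * fromBlocks 1 0 1 1 =
      fromBlocks 1 1 1 0 := by
    simp [fromBlocks_multiply]
  have hdet := congrArg det h
  rw [det_mul, det_fromBlocks_zero₁₂, det_fromBlocks_one₁₁] at hdet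
  simpa [det_neg] using hdet

/-- Swap the block columns, then take the Schur complement of `B`. -/
theorem det_fromBlocks_of_invertible₁₂ (A B C D : Matrix n n R) [Invertible B]
    (hBD : Commute B D) :
    (fromBlocks A B C D).det = (D * A - B * C).det := by
  have hswap : fromBlocks A B C D * fromBlocks 0 1 1 0 = fromBlocks B A D C := by
    simp [fromBlocks_multiply]
  have hschur : B * (C - D * ⅟B * A) = -(D * A - B * C) := by
    rw [mul_sub, ← mul_assoc, ← mul_assoc, hBD.eq, mul_assoc D, mul_invOf_self, mul_one, neg_sub]
  have hdet := congrArg det hswap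
  rw [det_mul, det_fromBlocks_zero_one_one_zero, det_fromBlocks₁₁ B, ← det_mul, hschur,
    det_neg] at hdet
  have hsq : ((-1 : R) ^ Fintype.card n) * (-1) ^ Fintype.card n = 1 := by
    rw [← mul_pow]; simp
  calc (fromBlocks A B C D).det
      = (fromBlocks A B C D).det * (-1) ^ Fintype.card n * (-1) ^ Fintype.card n := by
        rw [mul_assoc, hsq, mul_one]
    _ = (D * A - B * C).det := by
        rw [hdet, mul_comm _ (D * A - B * C).det, mul_assoc, hsq, mul_one]

end Blocks

section Tridiagonal

def tridiagonal (n : ℕ) (d u l : R) : Matrix (Fin n) (Fin n) R := fun p q =>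
  if p = q then d else if (q : ℕ) = p + 1 then u else if (p : ℕ) = q + 1 then l else 0

variable (d u l : R)

theorem tridiagonal_add_smul_one (n : ℕ) (c : R) :
    tridiagonal n d u l + c • 1 = tridiagonal n (d + c) u l := by
  ext p q
  by_cases h : p = q
  · simp [tridiagonal, h]
  · simp [tridiagonal, h, one_apply_ne h]

theorem submatrix_succ_tridiagonal (n : ℕ) :
    (tridiagonal (n + 1) d u l).submatrix Fin.succ Fin.succ = tridiagonal n d u l := by
  ext p q
  simp [tridiagonal, Fin.ext_iff]

theorem det_tridiagonal_succ_succ (n : ℕ) :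
    (tridiagonal (n + 2) d u l).det =
      d * (tridiagonal (n + 1) d u l).det - u * l * (tridiagonal n d u l).det := by
  have hminor : ((tridiagonal (n + 2) d u l).submatrix Fin.succ (Fin.succAbove 1)).det =
      l * (tridiagonal n d u l).det := by
    have hsub : ((tridiagonal (n + 2) d u l).submatrix Fin.succ (Fin.succAbove 1)).submatrix
        Fin.succ Fin.succ = tridiagonal n d u l := by
      ext p q
      simp [tridiagonal, Fin.succAbove, Fin.lt_def, Fin.ext_iff]
    rw [det_succ_column_zero, Fin.sum_univ_succ]
    simp [hsub, tridiagonal, Fin.succAbove, Fin.ext_iff]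
  rw [det_succ_row_zero, Fin.sum_univ_succ, Fin.sum_univ_succ]
  simp [tridiagonal, Fin.ext_iff, submatrix_succ_tridiagonal, hminor]
  ring

theorem det_tridiagonal_eq_pow_mul_fib (h : u * l = -d ^ 2) (n : ℕ) :
    (tridiagonal n d u l).det = d ^ n * Nat.fib (n + 1) := by
  induction n using Nat.twoStepInduction with
  | zero => simp
  | one => simp [tridiagonal]
  | more n ih₀ ih₁ =>
    rw [det_tridiagonal_succ_succ, ih₀, ih₁, h, Nat.fib_add_two (n := n + 1)]
    push_cast
    ring

end Tridiagonal

section SignedExchange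

def signedExchange (n : ℕ) : Matrix (Fin n) (Fin n) R := fun p q =>
  if q = p.rev then (-1) ^ (p : ℕ) else 0

variable {n : ℕ}

theorem mul_signedExchange_apply (M : Matrix (Fin n) (Fin n) R) (p q : Fin n) :
    (M * signedExchange n : Matrix (Fin n) (Fin n) R) p q = M p q.rev * (-1) ^ (q.rev : ℕ) := by
  rw [mul_apply, Finset.sum_eq_single q.rev]
  · simp [signedExchange]
  · intro r _ hr
    simp only [signedExchange, mul_ite, mul_zero, ite_eq_right_iff]
    rintro rfl
    simp at hr
  · simp

theorem signedExchange_mul_apply (M : Matrix (Fin n) (Fin n) R) (p q : Fin n) :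
    (signedExchange n * M : Matrix (Fin n) (Fin n) R) p q = (-1) ^ (p : ℕ) * M p.rev q := by
  rw [mul_apply, Finset.sum_eq_single p.rev]
  · simp [signedExchange]
  · intro r _ hr
    simp [signedExchange, hr]
  · simp

theorem signedExchange_mul_self :
    signedExchange n * signedExchange n = (-1 : R) ^ (n + 1) • (1 : Matrix (Fin n) (Fin n) R) := by
  ext p q
  rw [mul_signedExchange_apply]
  by_cases hpq : p = q
  · subst hpq
    have hsum : (p : ℕ) + (p.rev : ℕ) + 2 = n + 1 := by rw [Fin.val_rev]; omega
    simp [signedExchange, ← hsum, pow_add]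
  · simp [signedExchange, hpq, Ne.symm hpq]

/-- Conjugation by the exchange matrix transposes, and the alternating signs negate the
off-diagonal entries, so together they fix a tridiagonal matrix with `l = -u`. -/
theorem commute_tridiagonal_signedExchange (d u : R) :
    Commute (tridiagonal n d u (-u)) (signedExchange n) := by
  ext p q
  rw [mul_signedExchange_apply, signedExchange_mul_apply]
  have hp := p.isLt
  have hq := q.isLt
  simp only [tridiagonal, Fin.ext_iff, Fin.val_rev]
  split_ifs <;> try (exfalso; omega)
  · rw [show n - (q + 1) = p by omega]; ring
  · rw [show n - (q + 1) = p + 1 by omega, pow_succ]; ring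
  · rw [show (p : ℕ) = n - (q + 1) + 1 by omega, pow_succ]; ring
  · simp

end SignedExchange

end Matrix

open Matrix Complex

theorem stmt14_general (k : ℕ)
    (A B : Matrix (Fin k) (Fin k) ℂ)
    (hA : ∀ p q : Fin k, A p q =
      if q.1 = p.1 + 1 then Complex.I else if p.1 = q.1 + 1 then -Complex.I else 0)
    (hB : ∀ p q : Fin k, B p q =
      if p.1 + q.1 + 1 = k then (-1 : ℂ) ^ p.1 * 1 else 0) :
    (Matrix.fromBlocks A B (((-1 : ℂ) ^ k) • B) A).det = (Nat.fib (k + 1) : ℂ) ^ 2 := by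
  obtain rfl : A = tridiagonal k 0 I (-I) := by
    ext p q
    rw [hA]
    simp only [tridiagonal, Fin.ext_iff]
    split_ifs <;> first | rfl | omega
  obtain rfl : B = signedExchange k := by
    ext p q
    rw [hB]
    simp only [signedExchange, Fin.ext_iff, Fin.val_rev, mul_one]
    exact if_congr (by omega) rfl rfl
  have hE : (signedExchange k : Matrix (Fin k) (Fin k) ℂ) * ((-1 : ℂ) ^ k • signedExchange k)
      = -1 := by
    rw [Matrix.mul_smul, signedExchange_mul_self, smul_smul, ← pow_add,
      show k + (k + 1) = 2 * k + 1 by ring, pow_succ, pow_mul]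
    simp
  let _ : Invertible (signedExchange k : Matrix (Fin k) (Fin k) ℂ) :=
    invertibleOfRightInverse _ _ (by rw [Matrix.mul_neg, hE, neg_neg])
  have hfactor (T : Matrix (Fin k) (Fin k) ℂ) : T * T + 1 = (T + I • 1) * (T + (-I) • 1) := by
    simp only [add_mul, mul_add, Matrix.smul_mul, Matrix.mul_smul, Matrix.one_mul,
      Matrix.mul_one, smul_smul, I_mul_I, mul_neg, neg_smul, one_smul]
    abel
  rw [det_fromBlocks_of_invertible₁₂ _ _ _ _ (commute_tridiagonal_signedExchange 0 _).symm, hE,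
    sub_neg_eq_add, hfactor, det_mul, tridiagonal_add_smul_one, tridiagonal_add_smul_one,
    det_tridiagonal_eq_pow_mul_fib _ _ _ (by ring_nf),
    det_tridiagonal_eq_pow_mul_fib _ _ _ (by ring_nf), zero_add, zero_add, mul_mul_mul_comm,
    ← mul_pow]
  simp [sq]

/-- With `a = i`, `b = 1`: for all `k ≥ 1`, the determinant of the `2k × 2k` matrix
`F_{2k} = [[A_k, B_k], [(-1)^k B_k, A_k]]` equals `F(k+1)²`, the square of the
`(k+1)`-st Fibonacci number. -/
theorem stmt14 (k : ℕ) (hk : 1 ≤ k)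
    (A B : Matrix (Fin k) (Fin k) ℂ)
    (hA : ∀ p q : Fin k, A p q =
      if q.1 = p.1 + 1 then Complex.I else if p.1 = q.1 + 1 then -Complex.I else 0)
    (hB : ∀ p q : Fin k, B p q =
      if p.1 + q.1 + 1 = k then (-1 : ℂ) ^ p.1 * 1 else 0) :
    (Matrix.fromBlocks A B (((-1 : ℂ) ^ k) • B) A).det = (Nat.fib (k + 1) : ℂ) ^ 2 :=
  stmt14_general k A B hA hB
end
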